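/- Let p ≥ 1 and ω a primitive p-th root of unity. Then 1 - ∏_{j=1}^{p} (1 - ω^j x - ω^{j(p-1)} y) = x^p + y^p + ∑_{j=1}^{⌊p/2⌋} (-1)^{j-1} k_j x^j y^j for some positive real coefficients k_j. -/

import Mathlib

/-!
Choose `c, d` with `c + d = 1` and `c * d = x * y`. Since `ω ^ (p - 1) = ω⁻¹`, each factor
satisfies `c * (1 - ζ x - ζ⁻¹ y) = (c - ζ x) * (c - ζ⁻¹ y)` for `ζ = ω ^ j`, and over all `p`-th
roots of unity the right-hand factors multiply to `(c ^ p - x ^ p) * (c ^ p - y ^ p)`. As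
`(x y) ^ p = (c d) ^ p`, the product is `c ^ p + d ^ p - x ^ p - y ^ p`. Finally
`s n = c ^ n + d ^ n` satisfies `s (n + 2) = s (n + 1) - x y * s n`, so `s n` is the
Jacobsthal–Lucas polynomial `j_n` (with `j_0 = 2`, `j_1 = 1`, `j_{n+2} = j_{n+1} + t j_n`) at
`t = -x y`, and the `k_j` are its coefficients.
-/

open MvPolynomial Finset

@[to_additive Finset.sum_Icc_one_eq_sum_range]
theorem Finset.prod_Icc_one_eq_prod_range {M : Type*} [CommMonoid M] (f : ℕ → M) (m : ℕ) :
    ∏ j ∈ Icc 1 m, f j = ∏ i ∈ range m, f (i + 1) := by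
  rw [range_eq_Ico, prod_Ico_add' f 0 m 1, zero_add, Ico_add_one_right_eq_Icc]

noncomputable def jacobsthalLucas : ℕ → Polynomial ℕ
  | 0 => Polynomial.C 2
  | 1 => 1
  | n + 2 => jacobsthalLucas (n + 1) + Polynomial.X * jacobsthalLucas n

theorem aeval_neg_mul_jacobsthalLucas {R : Type*} [CommRing R] {c d : R} (h : c + d = 1) :
    ∀ n, Polynomial.aeval (-(c * d)) (jacobsthalLucas n) = c ^ n + d ^ n
  | 0 => by
    rw [jacobsthalLucas, Polynomial.aeval_C, map_ofNat, pow_zero, pow_zero, one_add_one_eq_two]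
  | 1 => by simp [jacobsthalLucas, h]
  | n + 2 => by
    simp only [jacobsthalLucas, map_add, map_mul, Polynomial.aeval_X,
      aeval_neg_mul_jacobsthalLucas h n, aeval_neg_mul_jacobsthalLucas h (n + 1)]
    linear_combination (-(c ^ (n + 1) + d ^ (n + 1))) * h

theorem coeff_jacobsthalLucas_eq_zero :
    ∀ {n j : ℕ}, n < 2 * j → (jacobsthalLucas n).coeff j = 0
  | 0, j, h => by rw [jacobsthalLucas, Polynomial.coeff_C, if_neg (by omega)]
  | 1, j, h => by simp [jacobsthalLucas, Polynomial.coeff_one, show j ≠ 0 by omega]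
  | n + 2, j + 1, h => by
    simp only [jacobsthalLucas, Polynomial.coeff_add, Polynomial.coeff_X_mul,
      coeff_jacobsthalLucas_eq_zero (show n + 1 < 2 * (j + 1) by omega),
      coeff_jacobsthalLucas_eq_zero (show n < 2 * j by omega)]

theorem coeff_jacobsthalLucas_zero : ∀ {n : ℕ}, 0 < n → (jacobsthalLucas n).coeff 0 = 1
  | 1, _ => by simp [jacobsthalLucas]
  | n + 2, _ => by simp [jacobsthalLucas, coeff_jacobsthalLucas_zero (Nat.succ_pos n)]

theorem coeff_jacobsthalLucas_pos : ∀ {n j : ℕ}, 2 * j ≤ n → 0 < (jacobsthalLucas n).coeff j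
  | 0, 0, _ => by simp [jacobsthalLucas]
  | 1, 0, _ => by simp [jacobsthalLucas]
  | n + 2, 0, _ => by simp [jacobsthalLucas, coeff_jacobsthalLucas_zero (Nat.succ_pos n)]
  | n + 2, j + 1, h => by
    rw [jacobsthalLucas, Polynomial.coeff_add, Polynomial.coeff_X_mul]
    have := coeff_jacobsthalLucas_pos (show 2 * j ≤ n by omega)
    omega

theorem natDegree_jacobsthalLucas_le (n : ℕ) : (jacobsthalLucas n).natDegree ≤ n / 2 :=
  Polynomial.natDegree_le_iff_coeff_eq_zero.2 fun _ h => coeff_jacobsthalLucas_eq_zero (by omega)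

theorem one_sub_pow_add_pow_eq_sum {R : Type*} [CommRing R] {c d : R} (h : c + d = 1) {n : ℕ}
    (hn : 0 < n) :
    1 - (c ^ n + d ^ n) = ∑ j ∈ Icc 1 (n / 2),
      (-1) ^ (j - 1) * ((jacobsthalLucas n).coeff j : R) * (c * d) ^ j := by
  rw [← aeval_neg_mul_jacobsthalLucas h n,
    Polynomial.aeval_eq_sum_range' (Nat.lt_succ_of_le (natDegree_jacobsthalLucas_le n)),
    sum_range_succ', coeff_jacobsthalLucas_zero hn, one_smul, pow_zero, sub_add_cancel_right,
    ← sum_neg_distrib, sum_Icc_one_eq_sum_range]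
  refine sum_congr rfl fun i _ => ?_
  rw [nsmul_eq_mul, Nat.add_sub_cancel, neg_pow, pow_succ (-1 : R)]
  ring

theorem prod_Icc_one_pow_eq_prod_range_pow {R M : Type*} [Monoid R] [CommMonoid M]
    {ω : R} {p : ℕ} (hω : ω ^ p = 1) (f : R → M) :
    ∏ j ∈ Icc 1 p, f (ω ^ j) = ∏ j ∈ range p, f (ω ^ j) := by
  rw [Finset.prod_Icc_one_eq_prod_range]
  rcases p with _ | q
  · simp
  · rw [prod_range_succ, hω, ← pow_zero ω]
    exact (prod_range_succ' (fun j => f (ω ^ j)) q).symm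

theorem IsPrimitiveRoot.prod_range_sub_pow_mul {R : Type*} [CommRing R] [IsDomain R] {ω : R}
    {p : ℕ} (hω : IsPrimitiveRoot ω p) (hp : 0 < p) (c x : R) :
    ∏ j ∈ range p, (c - ω ^ j * x) = c ^ p - x ^ p := by
  simpa [Polynomial.eval_prod] using
    congrArg (Polynomial.eval c) (X_pow_sub_C_eq_prod hω hp (rfl : x ^ p = x ^ p)).symm

theorem IsPrimitiveRoot.prod_Icc_one_sub_mul_sub_pow_mul {R : Type*} [CommRing R] [IsDomain R]
    {ω : R} {p : ℕ} (hω : IsPrimitiveRoot ω p) (hp : 0 < p) {x y c d : R} (hcd : c + d = 1)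
    (hxy : c * d = x * y) :
    ∏ j ∈ Icc 1 p, (1 - ω ^ j * x - ω ^ (j * (p - 1)) * y) = c ^ p + d ^ p - x ^ p - y ^ p := by
  wlog hc : c ≠ 0 generalizing c d
  · have hd : d ≠ 0 := by rintro rfl; simp_all
    rw [add_comm (c ^ p)]
    exact this (by rwa [add_comm]) (by rwa [mul_comm]) hd
  have hω' : IsPrimitiveRoot (ω ^ (p - 1)) p :=
    hω.pow_of_coprime _ ((Nat.coprime_self_sub_left hp).2 (Nat.coprime_one_left p))
  have factor (ζ : R) (hζ : ζ ^ p = 1) :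
      c * (1 - ζ * x - ζ ^ (p - 1) * y) = (c - ζ * x) * (c - ζ ^ (p - 1) * y) := by
    have hu : ζ ^ (p - 1) * ζ = 1 := by rw [← pow_succ, Nat.sub_add_cancel hp, hζ]
    linear_combination (-c) * hcd + hxy - x * y * hu
  apply mul_left_cancel₀ (pow_ne_zero p hc)
  calc c ^ p * ∏ j ∈ Icc 1 p, (1 - ω ^ j * x - ω ^ (j * (p - 1)) * y)
      = ∏ j ∈ range p, c * (1 - ω ^ j * x - (ω ^ j) ^ (p - 1) * y) := by
        simp_rw [pow_mul]
        rw [prod_Icc_one_pow_eq_prod_range_pow hω.pow_eq_one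
          (fun ζ => 1 - ζ * x - ζ ^ (p - 1) * y), prod_mul_distrib, prod_const, card_range]
    _ = (∏ j ∈ range p, (c - ω ^ j * x)) * ∏ j ∈ range p, (c - (ω ^ (p - 1)) ^ j * y) := by
        rw [← prod_mul_distrib]
        refine prod_congr rfl fun j _ => ?_
        rw [factor _ (by rw [pow_right_comm, hω.pow_eq_one, one_pow]), pow_right_comm]
    _ = (c ^ p - x ^ p) * (c ^ p - y ^ p) := by
        rw [hω.prod_range_sub_pow_mul hp, hω'.prod_range_sub_pow_mul hp]
    _ = c ^ p * (c ^ p + d ^ p - x ^ p - y ^ p) := by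
        linear_combination (-1 : R) * congrArg (· ^ p) hxy

theorem exists_add_eq_one_mul_eq {K : Type*} [Field K] [IsAlgClosed K] [NeZero (2 : K)] (m : K) :
    ∃ c d : K, c + d = 1 ∧ c * d = m := by
  obtain ⟨s, hs⟩ := IsAlgClosed.exists_eq_mul_self (1 - 4 * m)
  refine ⟨(1 + s) / 2, (1 - s) / 2, by field_simp; ring, ?_⟩
  field_simp
  linear_combination hs

theorem stmt_1 (p : ℕ) (hp : 1 ≤ p) (ω : ℂ) (hω : IsPrimitiveRoot ω p) :
    ∃ k : ℕ → ℝ, (∀ j ∈ Finset.Icc 1 (p / 2), 0 < k j) ∧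
      (1 - ∏ j ∈ Finset.Icc 1 p,
          (1 - C (ω ^ j) * X 0 - C (ω ^ (j * (p - 1))) * X 1) :
            MvPolynomial (Fin 2) ℂ)
        = X 0 ^ p + X 1 ^ p
            + ∑ j ∈ Finset.Icc 1 (p / 2),
                C ((-1 : ℂ) ^ (j - 1)) * C ((k j : ℂ)) * X 0 ^ j * X 1 ^ j := by
  refine ⟨fun j => (jacobsthalLucas p).coeff j, fun j hj => ?_, MvPolynomial.funext fun v => ?_⟩
  · have := (mem_Icc.1 hj).2
    exact Nat.cast_pos.2 (coeff_jacobsthalLucas_pos (n := p) (by omega))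
  obtain ⟨c, d, hcd, hxy⟩ := exists_add_eq_one_mul_eq (v 0 * v 1)
  have hsum := one_sub_pow_add_pow_eq_sum hcd hp
  simp only [map_sub, map_one, map_add, map_sum, map_prod, map_mul, map_pow, eval_C, eval_X,
    Complex.ofReal_natCast, hω.prod_Icc_one_sub_mul_sub_pow_mul hp hcd hxy]
  simp only [hxy, mul_pow, ← mul_assoc] at hsum
  linear_combination hsum
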